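/- arXiv:math-ph/0512057 — 2 statements merged into one kernel-verified Lean document; each statement's English description precedes it below -/
import Mathlib

section
/- Let ν ∈ (0,1) and let ψ : (0,∞) → ℂ be twice differentiable with ψ ∈ L²(0,∞) and (-ψ'' + ((ν² - 1/4)/x²)ψ) ∈ L²(0,∞). Then there exist constants C₅, C₆ ∈ ℂ such that ψ(x) = C₅ x^{-ν+1/2} + C₆ x^{ν+1/2} + O(x^{3/2}) as x → 0⁺. -/
open MeasureTheory Set Filter Asymptotics Topology

/-!
For `a = 1/2 - ν` and `b = 1/2 + ν` the powers `x ^ a`, `x ^ b` solve `A u = 0`, so the Wronskian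
`W_c = x ^ c ψ' - c x ^ (c - 1) ψ` (`c ∈ {a, b}`) has derivative `-x ^ c · Aψ`. As `Aψ ∈ L²` near `0`,
Cauchy–Schwarz gives `∫₀ˣ |t ^ c · Aψ| = O(x ^ (c + 1/2))`, hence `W_c(x) = C_c + O(x ^ (c + 1/2))`.
Since `a + b = 1`, eliminating `ψ'` gives `x ^ b W_a - x ^ a W_b = 2ν ψ`, and both error terms
become `O(x ^ (3/2))`.
-/
noncomputable def besselOp (k : ℝ) (ψ : ℝ → ℂ) (x : ℝ) : ℂ :=
  -(deriv (deriv ψ) x) + ((k / x ^ 2 : ℝ) : ℂ) * ψ x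

noncomputable def powWronskian (c : ℝ) (ψ : ℝ → ℂ) (x : ℝ) : ℂ :=
  ((x ^ c : ℝ) : ℂ) * deriv ψ x - ((c * x ^ (c - 1) : ℝ) : ℂ) * ψ x

theorem hasDerivAt_powWronskian {c k x : ℝ} {ψ : ℝ → ℂ} (hc : c * (c - 1) = k) (hx : 0 < x)
    (hψ : DifferentiableAt ℝ ψ x) (hψ' : DifferentiableAt ℝ (deriv ψ) x) :
    HasDerivAt (powWronskian c ψ) (-(((x ^ c : ℝ) : ℂ) * besselOp k ψ x)) x := by
  have hu : HasDerivAt (fun y : ℝ => ((y ^ c : ℝ) : ℂ)) ((c * x ^ (c - 1) : ℝ) : ℂ) x :=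
    (Real.hasDerivAt_rpow_const (Or.inl hx.ne')).ofReal_comp
  have hu' : HasDerivAt (fun y : ℝ => ((c * y ^ (c - 1) : ℝ) : ℂ))
      ((c * ((c - 1) * x ^ (c - 1 - 1)) : ℝ) : ℂ) x :=
    ((Real.hasDerivAt_rpow_const (Or.inl hx.ne')).const_mul c).ofReal_comp
  have hu'' : c * ((c - 1) * x ^ (c - 1 - 1)) = k / x ^ 2 * x ^ c := by
    rw [← mul_assoc, hc, show c - 1 - 1 = c + (-2 : ℝ) by ring, Real.rpow_add hx,
      Real.rpow_neg hx.le, Real.rpow_two]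
    field_simp
  refine ((hu.mul hψ'.hasDerivAt).sub (hu'.mul hψ.hasDerivAt)).congr_deriv ?_
  rw [hu'', besselOp]
  push_cast
  ring

theorem two_mul_mul_le_mul_sq_add_sq_div {a b ε : ℝ} (hε : 0 < ε) :
    2 * (a * b) ≤ ε * a ^ 2 + b ^ 2 / ε := by
  have key : ε * a ^ 2 + b ^ 2 / ε - 2 * (a * b) = (ε * a - b) ^ 2 / ε := by
    field_simp
    ring
  linarith [div_nonneg (sq_nonneg (ε * a - b)) hε.le]

theorem norm_ofReal_rpow_mul_le {c t ε : ℝ} (ht : 0 < t) (hε : 0 < ε) (z : ℂ) :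
    ‖((t ^ c : ℝ) : ℂ) * z‖ ≤ (ε * t ^ (2 * c) + ‖z‖ ^ 2 / ε) / 2 := by
  rw [norm_mul, Complex.norm_real, Real.norm_of_nonneg (Real.rpow_nonneg ht.le c),
    two_mul, Real.rpow_add ht, ← sq]
  linarith [two_mul_mul_le_mul_sq_add_sq_div (a := t ^ c) (b := ‖z‖) hε]

theorem integrableOn_rpow_Ioc {r x : ℝ} (hr : -1 < r) (hx : 0 ≤ x) :
    IntegrableOn (fun t : ℝ => t ^ r) (Ioc 0 x) :=
  (intervalIntegrable_iff_integrableOn_Ioc_of_le hx).mp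
    (intervalIntegral.intervalIntegrable_rpow' hr)

theorem MeasureTheory.IntegrableOn.ofReal_rpow_mul {c x : ℝ} {g : ℝ → ℂ} (hc : -1/2 < c)
    (hx : 0 ≤ x) (hg : IntegrableOn (fun t => ‖g t‖ ^ 2) (Ioc 0 x))
    (hm : AEStronglyMeasurable (fun t => ((t ^ c : ℝ) : ℂ) * g t) (volume.restrict (Ioc 0 x))) :
    IntegrableOn (fun t => ((t ^ c : ℝ) : ℂ) * g t) (Ioc 0 x) := by
  refine Integrable.mono' (g := fun t => (1 * t ^ (2 * c) + ‖g t‖ ^ 2 / 1) / 2)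
    ((((integrableOn_rpow_Ioc (by linarith) hx).const_mul 1).add (hg.div_const 1)).div_const 2)
    hm ?_
  filter_upwards [ae_restrict_mem measurableSet_Ioc] with t ht
  exact norm_ofReal_rpow_mul_le ht.1 one_pos (g t)

theorem integral_norm_ofReal_rpow_mul_le {c x : ℝ} {g : ℝ → ℂ} (hc : -1/2 < c) (hx : 0 < x)
    (hg : IntegrableOn (fun t => ‖g t‖ ^ 2) (Ioc 0 x)) :
    ∫ t in Ioc 0 x, ‖((t ^ c : ℝ) : ℂ) * g t‖
      ≤ ((2 * c + 1)⁻¹ + ∫ t in Ioc 0 x, ‖g t‖ ^ 2) / 2 * x ^ (c + 1/2) := by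
  set s := x ^ (c + 1/2)
  have hs : 0 < s := Real.rpow_pos_of_pos hx _
  have hss : x ^ (2 * c + 1) = s * s := by
    rw [← Real.rpow_add hx]
    ring_nf
  have hpow : IntegrableOn (fun t : ℝ => t ^ (2 * c)) (Ioc 0 x) :=
    integrableOn_rpow_Ioc (by linarith) hx.le
  have hint : ∫ t in Ioc 0 x, t ^ (2 * c) = s * s / (2 * c + 1) := by
    rw [← intervalIntegral.integral_of_le hx.le, integral_rpow (Or.inl (by linarith)),
      Real.zero_rpow (by linarith), hss, sub_zero]
  -- Cauchy–Schwarz in the form of AM–GM with weight `s⁻¹`, which balances the two terms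
  calc ∫ t in Ioc 0 x, ‖((t ^ c : ℝ) : ℂ) * g t‖
      ≤ ∫ t in Ioc 0 x, (s⁻¹ * t ^ (2 * c) + ‖g t‖ ^ 2 / s⁻¹) / 2 := by
        refine integral_mono_of_nonneg (ae_of_all _ fun t => norm_nonneg _)
          (((hpow.const_mul _).add (hg.div_const _)).div_const 2) ?_
        filter_upwards [ae_restrict_mem measurableSet_Ioc] with t ht
        exact norm_ofReal_rpow_mul_le ht.1 (inv_pos.mpr hs) (g t)
    _ = (s⁻¹ * (s * s / (2 * c + 1)) + (∫ t in Ioc 0 x, ‖g t‖ ^ 2) / s⁻¹) / 2 := by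
        rw [integral_div, integral_add (hpow.const_mul _) (hg.div_const _), integral_const_mul,
          integral_div, hint]
    _ = ((2 * c + 1)⁻¹ + ∫ t in Ioc 0 x, ‖g t‖ ^ 2) / 2 * s := by
        field_simp

theorem isBigO_intervalIntegral_ofReal_rpow_mul {c : ℝ} {g : ℝ → ℂ} (hc : -1/2 < c)
    (hg : IntegrableOn (fun t => ‖g t‖ ^ 2) (Ioc 0 1)) :
    (fun x => ∫ t in (0:ℝ)..x, ((t ^ c : ℝ) : ℂ) * g t) =O[𝓝[>] 0] fun x => x ^ (c + 1/2) := by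
  refine IsBigO.of_bound (((2 * c + 1)⁻¹ + ∫ t in Ioc 0 1, ‖g t‖ ^ 2) / 2) ?_
  filter_upwards [Ioo_mem_nhdsGT one_pos] with x hx
  have hsub : Ioc 0 x ⊆ Ioc 0 1 := Ioc_subset_Ioc_right hx.2.le
  have hs : 0 < x ^ (c + 1/2) := Real.rpow_pos_of_pos hx.1 _
  rw [intervalIntegral.integral_of_le hx.1.le, Real.norm_of_nonneg hs.le]
  calc ‖∫ t in Ioc 0 x, ((t ^ c : ℝ) : ℂ) * g t‖
      ≤ ∫ t in Ioc 0 x, ‖((t ^ c : ℝ) : ℂ) * g t‖ := norm_integral_le_integral_norm _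
    _ ≤ ((2 * c + 1)⁻¹ + ∫ t in Ioc 0 x, ‖g t‖ ^ 2) / 2 * x ^ (c + 1/2) :=
        integral_norm_ofReal_rpow_mul_le hc hx.1 (hg.mono_set hsub)
    _ ≤ ((2 * c + 1)⁻¹ + ∫ t in Ioc 0 1, ‖g t‖ ^ 2) / 2 * x ^ (c + 1/2) := by
        have hmono : ∫ t in Ioc 0 x, ‖g t‖ ^ 2 ≤ ∫ t in Ioc 0 1, ‖g t‖ ^ 2 :=
          setIntegral_mono_set hg (ae_of_all _ fun t => by positivity) hsub.eventuallyLE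
        gcongr

theorem exists_isBigO_powWronskian_sub {c k : ℝ} {ψ : ℝ → ℂ} (hc : c * (c - 1) = k)
    (hc' : -1/2 < c) (hψ : ∀ x ∈ Ioi (0:ℝ), DifferentiableAt ℝ ψ x)
    (hψ' : ∀ x ∈ Ioi (0:ℝ), DifferentiableAt ℝ (deriv ψ) x)
    (hAψ : IntegrableOn (fun x => ‖besselOp k ψ x‖ ^ 2) (Ioc 0 1)) :
    ∃ C, (fun x => powWronskian c ψ x - C) =O[𝓝[>] 0] fun x => x ^ (c + 1/2) := by
  set f : ℝ → ℂ := fun t => ((t ^ c : ℝ) : ℂ) * besselOp k ψ t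
  have hW : ∀ t ∈ Ioi (0:ℝ), HasDerivAt (powWronskian c ψ) (-f t) t :=
    fun t ht => hasDerivAt_powWronskian hc ht (hψ t ht) (hψ' t ht)
  -- measurability of `f` comes for free: it is minus a derivative
  have hf : IntegrableOn f (Ioc 0 1) := by
    refine hAψ.ofReal_rpow_mul hc' zero_le_one ?_
    refine ((stronglyMeasurable_deriv (powWronskian c ψ)).aestronglyMeasurable.neg).congr ?_
    filter_upwards [ae_restrict_mem measurableSet_Ioc] with t ht
    rw [Pi.neg_apply, (hW t ht.1).deriv, neg_neg]
  refine ⟨powWronskian c ψ 1 + ∫ t in (0:ℝ)..1, f t, ?_⟩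
  refine (isBigO_intervalIntegral_ofReal_rpow_mul hc' hAψ).neg_left.congr' ?_ EventuallyEq.rfl
  filter_upwards [Ioo_mem_nhdsGT one_pos] with x hx
  show -(∫ t in (0:ℝ)..x, f t) = _
  have hf' : ∀ {a b : ℝ}, 0 ≤ a → b ≤ 1 → a ≤ b → IntervalIntegrable f volume a b :=
    fun ha hb hab => (intervalIntegrable_iff_integrableOn_Ioc_of_le hab).mpr
      (hf.mono_set (Ioc_subset_Ioc ha hb))
  have hftc : ∫ t in x..1, -f t = powWronskian c ψ 1 - powWronskian c ψ x :=
    intervalIntegral.integral_eq_sub_of_hasDerivAt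
      (fun t ht => hW t (hx.1.trans_le (uIcc_of_le hx.2.le ▸ ht).1))
      (hf' hx.1.le le_rfl hx.2.le).neg
  have hsplit := intervalIntegral.integral_add_adjacent_intervals
    (hf' le_rfl hx.2.le hx.1.le) (hf' hx.1.le le_rfl hx.2.le)
  rw [intervalIntegral.integral_neg] at hftc
  linear_combination -hsplit - hftc

theorem Asymptotics.IsBigO.ofReal_rpow_mul {l : Filter ℝ} {a c : ℝ} {f : ℝ → ℂ}
    (hl : ∀ᶠ x in l, 0 < x) (h : f =O[l] fun x => x ^ c) :
    (fun x => ((x ^ a : ℝ) : ℂ) * f x) =O[l] fun x => x ^ (a + c) := by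
  refine ((isBigO_of_le _ fun x => (Complex.norm_real (x ^ a)).le).mul h).congr' EventuallyEq.rfl ?_
  filter_upwards [hl] with x hx
  exact (Real.rpow_add hx a c).symm

theorem rpow_mul_powWronskian_sub {a b x : ℝ} (ψ : ℝ → ℂ) (hab : a + b = 1) (hx : 0 < x) :
    ((x ^ b : ℝ) : ℂ) * powWronskian a ψ x - ((x ^ a : ℝ) : ℂ) * powWronskian b ψ x
      = ((b - a : ℝ) : ℂ) * ψ x := by
  have e₁ : ((x ^ b : ℝ) : ℂ) * ((x ^ (a - 1) : ℝ) : ℂ) = 1 := by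
    rw [← Complex.ofReal_mul, ← Real.rpow_add hx, show b + (a - 1) = 0 by linarith,
      Real.rpow_zero, Complex.ofReal_one]
  have e₂ : ((x ^ a : ℝ) : ℂ) * ((x ^ (b - 1) : ℝ) : ℂ) = 1 := by
    rw [← Complex.ofReal_mul, ← Real.rpow_add hx, show a + (b - 1) = 0 by linarith,
      Real.rpow_zero, Complex.ofReal_one]
  simp only [powWronskian, Complex.ofReal_mul, Complex.ofReal_sub]
  linear_combination (-(a : ℂ) * ψ x) * e₁ + ((b : ℂ) * ψ x) * e₂

theorem stmt_0_general (ν : ℝ) (hν : ν ∈ Ioo (0:ℝ) 1) (ψ : ℝ → ℂ)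
    (hψ : ∀ x ∈ Ioi (0:ℝ), DifferentiableAt ℝ ψ x)
    (hψ' : ∀ x ∈ Ioi (0:ℝ), DifferentiableAt ℝ (deriv ψ) x)
    (hAL2 : IntegrableOn
      (fun x => ‖-(deriv (deriv ψ) x) + (((ν ^ 2 - 1/4) / x ^ 2 : ℝ) : ℂ) * ψ x‖ ^ 2)
      (Ioi (0:ℝ))) :
    ∃ C₅ C₆ : ℂ,
      (fun x : ℝ => ψ x - C₅ * ((x ^ (-ν + 1/2) : ℝ) : ℂ) - C₆ * ((x ^ (ν + 1/2) : ℝ) : ℂ))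
        =O[𝓝[>] (0:ℝ)] fun x => x ^ ((3:ℝ)/2) := by
  obtain ⟨hν0, hν1⟩ := hν
  have hAψ : IntegrableOn (fun x => ‖besselOp (ν ^ 2 - 1/4) ψ x‖ ^ 2) (Ioc 0 1) :=
    hAL2.mono_set Ioc_subset_Ioi_self
  obtain ⟨C₁, h₁⟩ := exists_isBigO_powWronskian_sub (c := -ν + 1/2) (by ring) (by linarith)
    hψ hψ' hAψ
  obtain ⟨C₂, h₂⟩ := exists_isBigO_powWronskian_sub (c := ν + 1/2) (by ring) (by linarith)
    hψ hψ' hAψ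
  have hpos : ∀ᶠ x in 𝓝[>] (0:ℝ), 0 < x := self_mem_nhdsWithin
  have h₁' := h₁.ofReal_rpow_mul (a := ν + 1/2) hpos
  have h₂' := h₂.ofReal_rpow_mul (a := -ν + 1/2) hpos
  rw [show ν + 1/2 + (-ν + 1/2 + 1/2) = 3/2 by ring] at h₁'
  rw [show -ν + 1/2 + (ν + 1/2 + 1/2) = 3/2 by ring] at h₂'
  have h2ν : (2 * ν : ℂ) ≠ 0 := by exact_mod_cast (by positivity : 2 * ν ≠ 0)
  refine ⟨-C₂ / (2 * ν), C₁ / (2 * ν), ((h₁'.sub h₂').const_mul_left (2 * ν : ℂ)⁻¹).congr' ?_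
    EventuallyEq.rfl⟩
  filter_upwards [hpos] with x hx
  have hψx := rpow_mul_powWronskian_sub ψ (a := -ν + 1/2) (b := ν + 1/2) (by ring) hx
  rw [show ν + 1/2 - (-ν + 1/2) = 2 * ν by ring, Complex.ofReal_mul, Complex.ofReal_ofNat,
    eq_comm, ← eq_inv_mul_iff_mul_eq₀ h2ν] at hψx
  rw [hψx]
  ring

/-- Boundary behavior at the singular endpoint `x = 0` of functions in the maximal
domain of `A = -d²/dx² + (ν²-1/4)/x²` on `L²(0,∞)`, for `0 < ν < 1`. -/
theorem stmt_0 (ν : ℝ) (hν : ν ∈ Ioo (0:ℝ) 1) (ψ : ℝ → ℂ)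
    (hψ : ∀ x ∈ Ioi (0:ℝ), DifferentiableAt ℝ ψ x)
    (hψ' : ∀ x ∈ Ioi (0:ℝ), DifferentiableAt ℝ (deriv ψ) x)
    (hL2 : IntegrableOn (fun x => ‖ψ x‖ ^ 2) (Ioi (0:ℝ)))
    (hAL2 : IntegrableOn
      (fun x => ‖-(deriv (deriv ψ) x) + (((ν ^ 2 - 1/4) / x ^ 2 : ℝ) : ℂ) * ψ x‖ ^ 2)
      (Ioi (0:ℝ))) :
    ∃ C₅ C₆ : ℂ,
      (fun x : ℝ => ψ x - C₅ * ((x ^ (-ν + 1/2) : ℝ) : ℂ) - C₆ * ((x ^ (ν + 1/2) : ℝ) : ℂ))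
        =O[𝓝[>] (0:ℝ)] fun x => x ^ ((3:ℝ)/2) :=
  stmt_0_general ν hν ψ hψ hψ' hAL2
end

section
/- Let ν ∈ (0,1), and let ψ ∈ L²(0,∞) with -ψ'' + ((ν²-1/4)/x²)ψ =: g ∈ L²(0,∞). Define χ(x) = x^{-ν-1/2} ψ(x). Then (x^{2ν+1} χ'(x))' = -x^{ν+1/2} g(x), and the right-hand side is integrable near 0; consequently there is C₁ ∈ ℂ with χ'(x) = C₁ x^{-1-2ν} - x^{-1-2ν} ∫₀ˣ y^{ν+1/2} g(y) dy. -/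
/-!
Writing `χ = x^{-ν-1/2} ψ`, one has `x^{2ν+1} χ' = -(ν+1/2) x^{ν-1/2} ψ + x^{ν+1/2} ψ'`; differentiating
once more, the two `ψ'` terms cancel and what remains is `-x^{ν+1/2} (-ψ'' + (ν²-1/4) x⁻² ψ)`.
On `(0, b)` the weight `y^{ν+1/2}` is bounded and `g ∈ L²` on a set of finite measure, so
`y^{ν+1/2} g` is integrable there, and the fundamental theorem of calculus anchored at `0` gives
`x^{2ν+1} χ'(x) = C₁ - ∫₀ˣ y^{ν+1/2} g`.
-/

open MeasureTheory Set

/-- `χ(x) = x^{-ν-1/2} ψ(x)`. -/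
noncomputable def chiFun (ν : ℝ) (ψ : ℝ → ℂ) : ℝ → ℂ :=
  fun x => ((x ^ (-ν - 1/2) : ℝ) : ℂ) * ψ x

noncomputable def besselOperator (ν : ℝ) (ψ : ℝ → ℂ) (x : ℝ) : ℂ :=
  -(deriv (deriv ψ) x) + (((ν ^ 2 - 1/4) / x ^ 2 : ℝ) : ℂ) * ψ x

lemma hasDerivAt_ofReal_rpow_const {x : ℝ} (hx : x ≠ 0) (p : ℝ) :
    HasDerivAt (fun t : ℝ => ((t ^ p : ℝ) : ℂ)) ((p * x ^ (p - 1) : ℝ) : ℂ) x :=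
  (Real.hasDerivAt_rpow_const (Or.inl hx)).ofReal_comp

lemma hasDerivAt_chiFun (ν : ℝ) {ψ : ℝ → ℂ} {x : ℝ} (hx : x ≠ 0) (hψ : DifferentiableAt ℝ ψ x) :
    HasDerivAt (chiFun ν ψ) (((-ν - 1/2) * x ^ (-ν - 1/2 - 1) : ℝ) * ψ x
      + ((x ^ (-ν - 1/2) : ℝ) : ℂ) * deriv ψ x) x :=
  (hasDerivAt_ofReal_rpow_const hx _).mul hψ.hasDerivAt

lemma rpow_mul_deriv_chiFun (ν : ℝ) {ψ : ℝ → ℂ} {x : ℝ} (hx : 0 < x)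
    (hψ : DifferentiableAt ℝ ψ x) :
    ((x ^ (2 * ν + 1) : ℝ) : ℂ) * deriv (chiFun ν ψ) x =
      (((-ν - 1/2) * x ^ (ν - 1/2) : ℝ) : ℂ) * ψ x + ((x ^ (ν + 1/2) : ℝ) : ℂ) * deriv ψ x := by
  have h₁ : x ^ (2 * ν + 1) * x ^ (-ν - 1/2 - 1) = x ^ (ν - 1/2) := by
    rw [← Real.rpow_add hx]; ring_nf
  have h₂ : x ^ (2 * ν + 1) * x ^ (-ν - 1/2) = x ^ (ν + 1/2) := by
    rw [← Real.rpow_add hx]; ring_nf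
  rw [(hasDerivAt_chiFun ν hx.ne' hψ).deriv, ← h₁, ← h₂]
  push_cast
  ring

lemma hasDerivAt_rpow_mul_deriv_chiFun (ν : ℝ) {ψ : ℝ → ℂ} {x : ℝ} (hx : 0 < x)
    (hψ : ∀ y ∈ Ioi (0:ℝ), DifferentiableAt ℝ ψ y) (hψ' : DifferentiableAt ℝ (deriv ψ) x) :
    HasDerivAt (fun t : ℝ => ((t ^ (2 * ν + 1) : ℝ) : ℂ) * deriv (chiFun ν ψ) t)
      (-((x ^ (ν + 1/2) : ℝ) : ℂ) * besselOperator ν ψ x) x := by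
  have hE := (((hasDerivAt_ofReal_rpow_const hx.ne' (ν - 1/2)).const_mul
      ((-ν - 1/2 : ℝ) : ℂ)).mul (hψ x hx).hasDerivAt).add
    ((hasDerivAt_ofReal_rpow_const hx.ne' (ν + 1/2)).mul hψ'.hasDerivAt)
  have hform : (fun t : ℝ => ((t ^ (2 * ν + 1) : ℝ) : ℂ) * deriv (chiFun ν ψ) t) =ᶠ[nhds x]
      fun t => ((-ν - 1/2 : ℝ) : ℂ) * ((t ^ (ν - 1/2) : ℝ) : ℂ) * ψ t
        + ((t ^ (ν + 1/2) : ℝ) : ℂ) * deriv ψ t := by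
    filter_upwards [isOpen_Ioi.mem_nhds hx] with t ht
    rw [rpow_mul_deriv_chiFun ν ht (hψ t ht)]
    push_cast
    ring
  refine (hE.congr_of_eventuallyEq hform).congr_deriv ?_
  have h₁ : x ^ (ν - 1/2 - 1) = x ^ (ν + 1/2) / x ^ 2 := by
    rw [← Real.rpow_natCast, ← Real.rpow_sub hx]; norm_num; ring_nf
  have h₂ : x ^ (ν + 1/2 - 1) = x ^ (ν - 1/2) := by ring_nf
  simp only [besselOperator, h₁, h₂]
  push_cast
  ring

lemma aestronglyMeasurable_besselOperator (ν : ℝ) {ψ : ℝ → ℂ} (hψ : ContinuousOn ψ (Ioi 0)) :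
    AEStronglyMeasurable (besselOperator ν ψ) (volume.restrict (Ioi 0)) := by
  refine (stronglyMeasurable_deriv (deriv ψ)).aestronglyMeasurable.neg.add
    (AEStronglyMeasurable.mul ?_ (hψ.aestronglyMeasurable measurableSet_Ioi))
  exact (Complex.measurable_ofReal.comp
    (measurable_const.div (measurable_id.pow_const 2))).aestronglyMeasurable

lemma integrableOn_ofReal_rpow_mul_Ioo {p b : ℝ} (hp : 0 ≤ p) {g : ℝ → ℂ}
    (hg : AEStronglyMeasurable g (volume.restrict (Ioo 0 b)))
    (hg2 : IntegrableOn (fun y => ‖g y‖ ^ 2) (Ioo 0 b)) :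
    IntegrableOn (fun y : ℝ => ((y ^ p : ℝ) : ℂ) * g y) (Ioo 0 b) := by
  have : IsFiniteMeasure (volume.restrict (Ioo (0:ℝ) b)) := by
    rw [isFiniteMeasure_restrict]; exact measure_Ioo_lt_top.ne
  refine (((memLp_two_iff_integrable_sq_norm hg).2 hg2).integrable one_le_two).bdd_mul
    (c := b ^ p) ?_ ?_
  · exact ((continuousOn_of_forall_continuousAt fun y hy =>
      Complex.continuous_ofReal.continuousAt.comp
        (Real.continuousAt_rpow_const y p (Or.inl hy.1.ne'))).aestronglyMeasurable measurableSet_Ioo)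
  · refine (ae_restrict_iff' measurableSet_Ioo).2 (ae_of_all _ fun y hy => ?_)
    rw [Complex.norm_real, Real.norm_of_nonneg (Real.rpow_nonneg hy.1.le p)]
    exact Real.rpow_le_rpow hy.1.le hy.2.le hp

lemma exists_eq_add_integral_Ioo_of_hasDerivAt {E : Type*} [NormedAddCommGroup E]
    [NormedSpace ℝ E] [CompleteSpace E] {Φ f : ℝ → E}
    (hΦ : ∀ x ∈ Ioi (0:ℝ), HasDerivAt Φ (f x) x) (hf : ∀ b, IntegrableOn f (Ioo 0 b)) :
    ∃ C, ∀ x ∈ Ioi (0:ℝ), Φ x = C + ∫ y in Ioo 0 x, f y := by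
  have hf' : ∀ b, 0 ≤ b → IntervalIntegrable f volume 0 b := fun b hb =>
    (intervalIntegrable_iff_integrableOn_Ioo_of_le hb).2 (hf b)
  have hIoo : ∀ b, 0 ≤ b → ∫ y in Ioo 0 b, f y = ∫ y in (0:ℝ)..b, f y := fun b hb => by
    rw [intervalIntegral.integral_of_le hb, integral_Ioc_eq_integral_Ioo]
  refine ⟨Φ 1 - ∫ y in Ioo 0 1, f y, fun x hx => ?_⟩
  have hftc : ∫ y in (1:ℝ)..x, f y = Φ x - Φ 1 := by
    refine intervalIntegral.integral_eq_sub_of_hasDerivAt (fun t ht => hΦ t ?_)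
      ((hf' 1 zero_le_one).symm.trans (hf' x (le_of_lt hx)))
    exact lt_of_lt_of_le (lt_min zero_lt_one hx) ht.1
  calc Φ x = Φ 1 + (Φ x - Φ 1) := by abel
    _ = _ := by
      rw [hIoo 1 zero_le_one, hIoo x (le_of_lt hx), ← hftc,
        ← intervalIntegral.integral_interval_sub_left (hf' x (le_of_lt hx)) (hf' 1 zero_le_one)]
      abel

theorem stmt_12_general (ν : ℝ) (hν : ν ∈ Ioo (0:ℝ) 1) (ψ g : ℝ → ℂ)
    (hψ : ∀ x ∈ Ioi (0:ℝ), DifferentiableAt ℝ ψ x)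
    (hψ' : ∀ x ∈ Ioi (0:ℝ), DifferentiableAt ℝ (deriv ψ) x)
    (hgL2 : IntegrableOn (fun x => ‖g x‖ ^ 2) (Ioi (0:ℝ)))
    (hgdef : ∀ x ∈ Ioi (0:ℝ),
      g x = -(deriv (deriv ψ) x) + (((ν ^ 2 - 1/4) / x ^ 2 : ℝ) : ℂ) * ψ x) :
    (∀ x ∈ Ioi (0:ℝ),
      deriv (fun t : ℝ => ((t ^ (2 * ν + 1) : ℝ) : ℂ) * deriv (chiFun ν ψ) t) x =
        -((x ^ (ν + 1/2) : ℝ) : ℂ) * g x) ∧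
    IntegrableOn (fun y : ℝ => ((y ^ (ν + 1/2) : ℝ) : ℂ) * g y) (Ioo (0:ℝ) 1) ∧
    ∃ C₁ : ℂ, ∀ x ∈ Ioi (0:ℝ),
      deriv (chiFun ν ψ) x = C₁ * ((x ^ (-1 - 2 * ν) : ℝ) : ℂ) -
        ((x ^ (-1 - 2 * ν) : ℝ) : ℂ) * ∫ y in Ioo (0:ℝ) x, ((y ^ (ν + 1/2) : ℝ) : ℂ) * g y := by
  have hΦ : ∀ x ∈ Ioi (0:ℝ), HasDerivAt
      (fun t : ℝ => ((t ^ (2 * ν + 1) : ℝ) : ℂ) * deriv (chiFun ν ψ) t)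
      (-((x ^ (ν + 1/2) : ℝ) : ℂ) * g x) x := fun x hx => by
    rw [hgdef x hx]; exact hasDerivAt_rpow_mul_deriv_chiFun ν hx hψ (hψ' x hx)
  have hg : AEStronglyMeasurable g (volume.restrict (Ioi 0)) :=
    (aestronglyMeasurable_besselOperator ν fun x hx => (hψ x hx).continuousAt.continuousWithinAt
      ).congr ((ae_restrict_iff' measurableSet_Ioi).2 (ae_of_all _ fun x hx => (hgdef x hx).symm))
  have hint : ∀ b, IntegrableOn (fun y : ℝ => ((y ^ (ν + 1/2) : ℝ) : ℂ) * g y) (Ioo 0 b) :=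
    fun b => integrableOn_ofReal_rpow_mul_Ioo (by linarith [hν.1])
      (hg.mono_measure (Measure.restrict_mono Ioo_subset_Ioi_self le_rfl))
      (hgL2.mono_set Ioo_subset_Ioi_self)
  refine ⟨fun x hx => (hΦ x hx).deriv, hint 1, ?_⟩
  obtain ⟨C, hC⟩ := exists_eq_add_integral_Ioo_of_hasDerivAt hΦ fun b => by
    simpa only [Pi.neg_def, neg_mul] using (hint b).neg
  refine ⟨C, fun x hx => ?_⟩
  have hinv : ((x ^ (-1 - 2 * ν) : ℝ) : ℂ) * ((x ^ (2 * ν + 1) : ℝ) : ℂ) = 1 := by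
    rw [← Complex.ofReal_mul, ← Real.rpow_add hx, show -1 - 2 * ν + (2 * ν + 1) = 0 by ring,
      Real.rpow_zero, Complex.ofReal_one]
  have hΦx := hC x hx
  simp only [neg_mul, integral_neg] at hΦx
  rw [← one_mul (deriv (chiFun ν ψ) x), ← hinv, mul_assoc, hΦx]
  ring

/-- The key structural identity in the proof of Theorem 2.1: with
`g = -ψ'' + ((ν²-1/4)/x²)ψ ∈ L²` and `χ = x^{-ν-1/2}ψ`, one has
`(x^{2ν+1} χ')' = -x^{ν+1/2} g`, the right-hand side is integrable near `0`, and hence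
`χ'(x) = C₁ x^{-1-2ν} - x^{-1-2ν} ∫₀ˣ y^{ν+1/2} g(y) dy` for some constant `C₁`. -/
theorem stmt_12 (ν : ℝ) (hν : ν ∈ Ioo (0:ℝ) 1) (ψ g : ℝ → ℂ)
    (hψ : ∀ x ∈ Ioi (0:ℝ), DifferentiableAt ℝ ψ x)
    (hψ' : ∀ x ∈ Ioi (0:ℝ), DifferentiableAt ℝ (deriv ψ) x)
    (hψL2 : IntegrableOn (fun x => ‖ψ x‖ ^ 2) (Ioi (0:ℝ)))
    (hgL2 : IntegrableOn (fun x => ‖g x‖ ^ 2) (Ioi (0:ℝ)))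
    (hgdef : ∀ x ∈ Ioi (0:ℝ),
      g x = -(deriv (deriv ψ) x) + (((ν ^ 2 - 1/4) / x ^ 2 : ℝ) : ℂ) * ψ x) :
    (∀ x ∈ Ioi (0:ℝ),
      deriv (fun t : ℝ => ((t ^ (2 * ν + 1) : ℝ) : ℂ) * deriv (chiFun ν ψ) t) x =
        -((x ^ (ν + 1/2) : ℝ) : ℂ) * g x) ∧
    IntegrableOn (fun y : ℝ => ((y ^ (ν + 1/2) : ℝ) : ℂ) * g y) (Ioo (0:ℝ) 1) ∧
    ∃ C₁ : ℂ, ∀ x ∈ Ioi (0:ℝ),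
      deriv (chiFun ν ψ) x = C₁ * ((x ^ (-1 - 2 * ν) : ℝ) : ℂ) -
        ((x ^ (-1 - 2 * ν) : ℝ) : ℂ) * ∫ y in Ioo (0:ℝ) x, ((y ^ (ν + 1/2) : ℝ) : ℂ) * g y :=
  stmt_12_general ν hν ψ g hψ hψ' hgL2 hgdef
end
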